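/- Let C ⊆ ℝⁿ be a nonempty closed convex cone, let Y > 0 be real, let Z, φ ∈ ℝⁿ, set ξ = Proj_C(Yφ − Z) and η := −(1/Y)(Z + ξ). Then Y‖η‖² + 2⟪η, Z⟫ + (1/Y)·dist(Yφ − Z, C)² − (1/Y)‖Yφ − Z‖² + (1/Y)‖Z‖² = 0. -/

import Mathlib

/-!
Write `a = Yφ − Z`. The left-hand side equals `(1/Y)(‖Yη + Z‖² + dist(a, C)² − ‖a‖²)`
by completing the square, and `Yη + Z = −ξ`. Since `C` is a cone containing `ξ`, the
projection `ξ` also minimises `‖a − tξ‖` over the ray `t ≥ 0`, which forces `⟪a − ξ, ξ⟫ = 0`;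
Pythagoras then gives `‖ξ‖² + ‖a − ξ‖² = ‖a‖²`.
-/

open Metric

theorem infDist_eq_norm_sub_of_forall_norm_sub_le {F : Type*} [SeminormedAddCommGroup F]
    {C : Set F} {a ξ : F} (hξC : ξ ∈ C)
    (hproj : ∀ b ∈ C, ‖a - ξ‖ ≤ ‖a - b‖) : infDist a C = ‖a - ξ‖ := by
  refine le_antisymm (dist_eq_norm a ξ ▸ infDist_le_dist_of_mem hξC) ?_
  exact (le_infDist ⟨ξ, hξC⟩).2 fun b hb ↦ dist_eq_norm a b ▸ hproj b hb

variable {E : Type*} [NormedAddCommGroup E] [InnerProductSpace ℝ E]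

theorem inner_sub_self_eq_zero_of_forall_norm_sub_smul_le {a ξ : E}
    (hmin : ∀ t : ℝ, 0 ≤ t → ‖a - ξ‖ ≤ ‖a - t • ξ‖) : inner ℝ (a - ξ) ξ = 0 := by
  rcases eq_or_ne ξ 0 with rfl | hξ
  · exact inner_zero_right _
  set c := inner ℝ (a - ξ) ξ
  have hq : 0 < ‖ξ‖ ^ 2 := by positivity
  have expand : ∀ t : ℝ, 0 ≤ t → 0 ≤ 2 * (1 - t) * c + (1 - t) ^ 2 * ‖ξ‖ ^ 2 := by
    intro t ht
    have hsq := pow_le_pow_left₀ (norm_nonneg _) (hmin t ht) 2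
    have hsplit : a - t • ξ = (a - ξ) + (1 - t) • ξ := by
      rw [sub_smul, one_smul]; abel
    rw [hsplit, norm_add_sq_real, inner_smul_right, norm_smul, mul_pow, Real.norm_eq_abs,
      sq_abs] at hsq
    linarith
  -- `t = 0` bounds `c` below; then `t = 1 + c/‖ξ‖² ≥ 0` is the unconstrained minimiser.
  have hc : -‖ξ‖ ^ 2 ≤ c := by nlinarith [expand 0 le_rfl]
  have hopt := expand (1 + c / ‖ξ‖ ^ 2) (by
    have : -1 ≤ c / ‖ξ‖ ^ 2 := by rw [le_div_iff₀ hq]; linarith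
    linarith)
  have : -(c ^ 2 / ‖ξ‖ ^ 2) = 2 * (1 - (1 + c / ‖ξ‖ ^ 2)) * c
      + (1 - (1 + c / ‖ξ‖ ^ 2)) ^ 2 * ‖ξ‖ ^ 2 := by
    field_simp; ring
  rw [← this, neg_nonneg] at hopt
  have hc2 : c ^ 2 ≤ 0 := by simpa using (div_le_iff₀ hq).1 hopt
  exact pow_eq_zero_iff two_ne_zero |>.1 (hc2.antisymm (sq_nonneg c))

theorem norm_sq_add_norm_sub_sq_of_smul_mem {C : Set E}
    (hcone : ∀ u ∈ C, ∀ l : ℝ, 0 ≤ l → l • u ∈ C) {a ξ : E} (hξC : ξ ∈ C)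
    (hproj : ∀ b ∈ C, ‖a - ξ‖ ≤ ‖a - b‖) : ‖ξ‖ ^ 2 + ‖a - ξ‖ ^ 2 = ‖a‖ ^ 2 := by
  have horth := inner_sub_self_eq_zero_of_forall_norm_sub_smul_le fun t ht ↦
    hproj _ (hcone ξ hξC t ht)
  have := norm_add_sq_real (a - ξ) ξ
  rw [horth, sub_add_cancel] at this
  linarith

theorem mul_norm_sq_add_two_inner_add_inv_mul_norm_sq {Y : ℝ} (hY : Y ≠ 0) (η Z : E) :
    Y * ‖η‖ ^ 2 + 2 * inner ℝ η Z + (1 / Y) * ‖Z‖ ^ 2 = (1 / Y) * ‖Y • η + Z‖ ^ 2 := by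
  rw [norm_add_sq_real, norm_smul, mul_pow, Real.norm_eq_abs, sq_abs, real_inner_smul_left]
  field_simp

theorem stmt_7_general {n : ℕ} (C : Set (EuclideanSpace ℝ (Fin n)))
    (hcone : ∀ u ∈ C, ∀ l : ℝ, 0 ≤ l → l • u ∈ C)
    (Y : ℝ) (hY : 0 < Y) (Z φ ξ : EuclideanSpace ℝ (Fin n)) (hξC : ξ ∈ C)
    (hproj : ∀ b ∈ C, ‖(Y • φ - Z) - ξ‖ ≤ ‖(Y • φ - Z) - b‖)
    (η : EuclideanSpace ℝ (Fin n)) (hη : η = -(1 / Y) • (Z + ξ)) :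
    Y * ‖η‖ ^ 2 + 2 * (inner ℝ η Z : ℝ)
      + (1 / Y) * (Metric.infDist (Y • φ - Z) C) ^ 2
      - (1 / Y) * ‖Y • φ - Z‖ ^ 2 + (1 / Y) * ‖Z‖ ^ 2 = 0 := by
  have hsquare := mul_norm_sq_add_two_inner_add_inv_mul_norm_sq hY.ne' η Z
  have hYηZ : Y • η + Z = -ξ := by
    rw [hη, smul_smul, mul_neg, mul_one_div_cancel hY.ne', neg_one_smul]
    abel
  rw [hYηZ, norm_neg] at hsquare
  rw [infDist_eq_norm_sub_of_forall_norm_sub_le hξC hproj,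
    ← norm_sq_add_norm_sub_sq_of_smul_mem hcone hξC hproj]
  linear_combination hsquare

/-- Identity (substep2): with `ξ = Proj_C(Yφ − Z)` and `η = −(1/Y)(Z + ξ)` for a
nonempty closed convex cone `C` and `Y > 0`,
`Y‖η‖² + 2⟪η, Z⟫ + (1/Y)dist(Yφ − Z, C)² − (1/Y)‖Yφ − Z‖² + (1/Y)‖Z‖² = 0`. -/
theorem stmt_7 {n : ℕ} (C : Set (EuclideanSpace ℝ (Fin n)))
    (hne : C.Nonempty) (hclosed : IsClosed C) (hconv : Convex ℝ C)
    (hcone : ∀ u ∈ C, ∀ l : ℝ, 0 ≤ l → l • u ∈ C)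
    (Y : ℝ) (hY : 0 < Y) (Z φ ξ : EuclideanSpace ℝ (Fin n)) (hξC : ξ ∈ C)
    (hproj : ∀ b ∈ C, ‖(Y • φ - Z) - ξ‖ ≤ ‖(Y • φ - Z) - b‖)
    (η : EuclideanSpace ℝ (Fin n)) (hη : η = -(1 / Y) • (Z + ξ)) :
    Y * ‖η‖ ^ 2 + 2 * (inner ℝ η Z : ℝ)
      + (1 / Y) * (Metric.infDist (Y • φ - Z) C) ^ 2
      - (1 / Y) * ‖Y • φ - Z‖ ^ 2 + (1 / Y) * ‖Z‖ ^ 2 = 0 :=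
  stmt_7_general C hcone Y hY Z φ ξ hξC hproj η hη
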